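/- arXiv:1606.04134 — 3 statements merged into one kernel-verified Lean document; each statement's English description precedes it below -/
import Mathlib

section
/- Let $0<r<1/2$ and let $P$ be the uniform Cantor distribution with ratio $r$. The set $\{S_1(1/2),\,S_2(1/2)\}=\{r/2,\;1-r/2\}$ achieves distortion error $\int\min_{a\in\{r/2,1-r/2\}}(x-a)^2\,dP(x)=r^2 V$, where $V=\frac{1-r}{4(1+r)}$. -/
/-!
Each `Sᵢ` maps `[0, 1]` into itself and contracts distances by `r`, so self-similarity forces
`P` to live on `[0, 1]`. There, the point of `{S₀ (1/2), S₁ (1/2)}` nearest to `Sᵢ x` is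
`Sᵢ (1/2)`, at squared distance `r² (x - 1/2)²`; averaging over `i` via the self-similarity
identity gives distortion `r² V` with `V = ∫ (x - 1/2)² dP`. Applying the same identity to `V`
itself, the cross terms cancel and `V = r² V + ((1 - r) / 2)²`.
-/

open MeasureTheory
open scoped ENNReal

noncomputable def Smap (r : ℝ) (i : Fin 2) : ℝ → ℝ :=
  fun x => if i = 0 then r * x else r * x + (1 - r)

noncomputable def Sword (r : ℝ) (σ : List (Fin 2)) : ℝ → ℝ :=
  σ.foldr (fun i g => Smap r i ∘ g) id

open Metric Set Filter Topology
open scoped NNReal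

section Tail

variable {α : Type*} [MeasurableSpace α] {μ : Measure α} [IsFiniteMeasure μ] {f : α → ℝ}

theorem tendsto_measure_setOf_lt_atTop (hf : Measurable f) :
    Tendsto (fun t : ℝ => μ {x | t < f x}) atTop (𝓝 0) := by
  have hempty : ⋂ t : ℝ, {x | t < f x} = ∅ :=
    eq_empty_of_forall_notMem fun x hx => lt_irrefl (f x) (mem_iInter.1 hx (f x))
  have h := tendsto_measure_iInter_atTop (μ := μ)
    (fun t => (measurableSet_lt measurable_const hf).nullMeasurableSet)
    (fun s t hst x (hx : t < f x) => (lt_of_le_of_lt hst hx : s < f x)) ⟨0, measure_ne_top μ _⟩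
  rwa [hempty, measure_empty] at h

theorem ae_nonpos_of_measure_lt_le_measure_mul_lt (hf : Measurable f) {c : ℝ} (hc : 1 < c)
    (h : ∀ t > 0, μ {x | t < f x} ≤ μ {x | c * t < f x}) : ∀ᵐ x ∂μ, f x ≤ 0 := by
  have hle_of_pos : ∀ t > 0, ∀ᵐ x ∂μ, f x ≤ t := by
    intro t ht
    have hiter : ∀ n : ℕ, μ {x | t < f x} ≤ μ {x | c ^ n * t < f x} := by
      intro n
      induction n with
      | zero => simp
      | succ n ih => simpa only [pow_succ', mul_assoc] using ih.trans (h _ (by positivity))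
    have hnull : μ {x | t < f x} = 0 := nonpos_iff_eq_zero.1 <|
      ge_of_tendsto' ((tendsto_measure_setOf_lt_atTop hf).comp
        ((tendsto_pow_atTop_atTop_of_one_lt hc).atTop_mul_const ht)) hiter
    exact ae_iff.2 (by simpa only [not_le] using hnull)
  filter_upwards [ae_all_iff.2 fun n : ℕ => hle_of_pos (1 / (n + 1)) Nat.one_div_pos_of_nat]
    with x hx
  exact ge_of_tendsto' tendsto_one_div_add_atTop_nhds_zero_nat hx

end Tail

theorem infDist_le_mul_of_lipschitzWith_of_mapsTo {X : Type*} [PseudoMetricSpace X] {g : X → X}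
    {K : ℝ≥0} {s : Set X} (hg : LipschitzWith K g) (hgs : MapsTo g s s) (hs : IsCompact s)
    (hne : s.Nonempty) (x : X) : infDist (g x) s ≤ K * infDist x s := by
  obtain ⟨y, hy, hxy⟩ := hs.exists_infDist_eq_dist hne x
  calc infDist (g x) s ≤ dist (g x) (g y) := infDist_le_dist_of_mem (hgs hy)
    _ ≤ K * dist x y := hg.dist_le_mul x y
    _ = K * infDist x s := by rw [hxy]

theorem Continuous.integrable_of_ae_mem_isCompact {X E : Type*} [TopologicalSpace X] [T2Space X]
    [MeasurableSpace X] [OpensMeasurableSpace X] [NormedAddCommGroup E] {μ : Measure X}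
    [IsFiniteMeasure μ] {K : Set X} (hK : IsCompact K) (hμK : ∀ᵐ x ∂μ, x ∈ K)
    {f : X → E} (hf : Continuous f) : Integrable f μ := by
  have hfK := hf.continuousOn.integrableOn_compact (μ := μ) hK
  rwa [IntegrableOn, Measure.restrict_eq_self_of_ae_mem hμK] at hfK

section Cantor

variable {r : ℝ} {P : Measure ℝ}

@[simp] theorem Smap_zero_apply (r x : ℝ) : Smap r 0 x = r * x := rfl

@[simp] theorem Smap_one_apply (r x : ℝ) : Smap r 1 x = r * x + (1 - r) := rfl

@[fun_prop] theorem continuous_Smap (r : ℝ) (i : Fin 2) : Continuous (Smap r i) := by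
  by_cases hi : i = 0 <;> unfold Smap <;> simp only [hi, if_true, if_false] <;> fun_prop

theorem lipschitzWith_Smap (hr : 0 ≤ r) (i : Fin 2) : LipschitzWith ⟨r, hr⟩ (Smap r i) := by
  refine LipschitzWith.of_dist_le_mul fun x y => le_of_eq ?_
  change dist _ _ = r * dist x y
  fin_cases i <;> simp [Real.dist_eq, ← mul_sub, abs_mul, abs_of_nonneg hr]

theorem mapsTo_Smap_Icc (hr0 : 0 ≤ r) (hr1 : r ≤ 1) (i : Fin 2) :
    MapsTo (Smap r i) (Icc 0 1) (Icc 0 1) := by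
  intro x ⟨hx0, hx1⟩
  fin_cases i <;> simp only [Fin.zero_eta, Fin.mk_one, Smap_zero_apply, Smap_one_apply, mem_Icc]
    <;> constructor <;> nlinarith

theorem min_sq_sub_Smap_eq (hr0 : 0 ≤ r) (hr : r ≤ 1 / 2) (i : Fin 2) {x : ℝ}
    (hx : x ∈ Icc (0 : ℝ) 1) :
    min ((Smap r i x - r / 2) ^ 2) ((Smap r i x - (1 - r / 2)) ^ 2) = r ^ 2 * (x - 1 / 2) ^ 2 := by
  obtain ⟨hx0, hx1⟩ := hx
  have hrx : 0 ≤ r * x := mul_nonneg hr0 hx0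
  have hrx' : r * x ≤ r := mul_le_of_le_one_right hr0 hx1
  fin_cases i
  · rw [Fin.zero_eta, Smap_zero_apply, min_eq_left (by nlinarith)]
    ring
  · rw [Fin.mk_one, Smap_one_apply, min_eq_right (by nlinarith)]
    ring

variable
    (hP : P = (2 : ℝ≥0∞)⁻¹ • P.map (Smap r 0) + (2 : ℝ≥0∞)⁻¹ • P.map (Smap r 1))
include hP

theorem measure_le_of_preimage_Smap_subset {s t : Set ℝ} (hs : MeasurableSet s)
    (hst : ∀ i, Smap r i ⁻¹' s ⊆ t) : P s ≤ P t := by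
  calc P s = 2⁻¹ * P (Smap r 0 ⁻¹' s) + 2⁻¹ * P (Smap r 1 ⁻¹' s) := by
        conv_lhs => rw [hP]
        simp only [Measure.add_apply, Measure.smul_apply, smul_eq_mul,
          Measure.map_apply (continuous_Smap r _).measurable hs]
    _ ≤ 2⁻¹ * P t + 2⁻¹ * P t := by gcongr <;> exact hst _
    _ = P t := by rw [← add_mul, ENNReal.inv_two_add_inv_two, one_mul]

-- Each `Sᵢ` shrinks the distance to `[0, 1]` by the factor `r`, so the mass at distance `> t`
-- is at most the mass at distance `> t / r`; iterating pushes it off to infinity.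
theorem ae_mem_Icc_of_selfSimilar [IsFiniteMeasure P] (hr0 : 0 < r) (hr1 : r < 1) :
    ∀ᵐ x ∂P, x ∈ Icc (0 : ℝ) 1 := by
  have hne : (Icc (0 : ℝ) 1).Nonempty := nonempty_Icc.2 zero_le_one
  have hdist : Measurable fun x : ℝ => infDist x (Icc 0 1) := (continuous_infDist_pt _).measurable
  have hcontract : ∀ i x, infDist (Smap r i x) (Icc 0 1) ≤ r * infDist x (Icc 0 1) := fun i =>
    infDist_le_mul_of_lipschitzWith_of_mapsTo (lipschitzWith_Smap hr0.le i)
      (mapsTo_Smap_Icc hr0.le hr1.le i) isCompact_Icc hne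
  have htail : ∀ t : ℝ,
      P {x | t < infDist x (Icc 0 1)} ≤ P {x | r⁻¹ * t < infDist x (Icc 0 1)} :=
    fun t => measure_le_of_preimage_Smap_subset hP (measurableSet_lt measurable_const hdist)
      fun i x (hx : t < _) => (inv_mul_lt_iff₀ hr0).2 (hx.trans_le (hcontract i x))
  filter_upwards [ae_nonpos_of_measure_lt_le_measure_mul_lt hdist ((one_lt_inv₀ hr0).2 hr1)
    fun t _ => htail t] with x hx
  exact (isClosed_Icc.mem_iff_infDist_zero hne).2 (le_antisymm hx infDist_nonneg)

theorem integral_eq_integral_average_Smap [IsFiniteMeasure P] {K : Set ℝ} (hK : IsCompact K)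
    (hPK : ∀ᵐ x ∂P, x ∈ K) {f : ℝ → ℝ} (hf : Continuous f) :
    ∫ x, f x ∂P = ∫ x, (f (Smap r 0 x) + f (Smap r 1 x)) / 2 ∂P := by
  have hint : ∀ i, Integrable (fun x => f (Smap r i x)) P := fun i =>
    (hf.comp (continuous_Smap r i)).integrable_of_ae_mem_isCompact hK hPK
  have hmap : ∀ i, Integrable f (P.map (Smap r i)) := fun i =>
    (integrable_map_measure hf.aestronglyMeasurable (continuous_Smap r i).aemeasurable).2 (hint i)
  conv_lhs => rw [hP]
  rw [integral_add_measure ((hmap 0).smul_measure (by simp)) ((hmap 1).smul_measure (by simp)),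
    integral_smul_measure, integral_smul_measure,
    integral_map (continuous_Smap r 0).aemeasurable hf.aestronglyMeasurable,
    integral_map (continuous_Smap r 1).aemeasurable hf.aestronglyMeasurable,
    integral_div, integral_add (hint 0) (hint 1)]
  simp only [ENNReal.toReal_inv, ENNReal.toReal_ofNat, smul_eq_mul]
  ring

theorem integral_sub_half_sq_of_selfSimilar [IsProbabilityMeasure P] (hr0 : 0 < r)
    (hr1 : r < 1) :
    ∫ x, (x - 1 / 2) ^ 2 ∂P = (1 - r) / (4 * (1 + r)) := by
  have hPK := ae_mem_Icc_of_selfSimilar hP hr0 hr1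
  set V := ∫ x, (x - 1 / 2) ^ 2 ∂P
  have hV : V = r ^ 2 * V + ((1 - r) / 2) ^ 2 := by
    calc V = ∫ x, ((Smap r 0 x - 1 / 2) ^ 2 + (Smap r 1 x - 1 / 2) ^ 2) / 2 ∂P :=
          integral_eq_integral_average_Smap hP isCompact_Icc hPK (by fun_prop)
      _ = ∫ x, (r ^ 2 * (x - 1 / 2) ^ 2 + ((1 - r) / 2) ^ 2) ∂P :=
          integral_congr_ae (.of_forall fun x => by
            simp only [Smap_zero_apply, Smap_one_apply]
            ring)
      _ = r ^ 2 * V + ((1 - r) / 2) ^ 2 := by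
          rw [integral_add ((by fun_prop : Continuous fun x : ℝ => r ^ 2 * (x - 1 / 2) ^ 2)
            |>.integrable_of_ae_mem_isCompact isCompact_Icc hPK) (integrable_const _),
            integral_const_mul, integral_const, probReal_univ, one_smul]
  rw [eq_div_iff (by positivity)]
  refine mul_left_cancel₀ (sub_ne_zero.2 hr1.ne') ?_
  linear_combination 4 * hV

end Cantor

theorem stmt6 (r : ℝ) (hr1 : 0 < r) (hr2 : r < 1/2)
    (P : Measure ℝ) [IsProbabilityMeasure P]
    (hP : P = (2 : ℝ≥0∞)⁻¹ • P.map (Smap r 0) + (2 : ℝ≥0∞)⁻¹ • P.map (Smap r 1)) :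
    ∫ x, min ((x - r/2)^2) ((x - (1 - r/2))^2) ∂P
      = r^2 * ((1 - r) / (4 * (1 + r))) := by
  have hPK := ae_mem_Icc_of_selfSimilar hP hr1 (by linarith)
  calc ∫ x, min ((x - r/2)^2) ((x - (1 - r/2))^2) ∂P
      = ∫ x, r ^ 2 * (x - 1 / 2) ^ 2 ∂P := by
        rw [integral_eq_integral_average_Smap hP isCompact_Icc hPK (by fun_prop)]
        refine integral_congr_ae (hPK.mono fun x hx => ?_)
        simp only [min_sq_sub_Smap_eq hr1.le hr2.le _ hx]
        ring
    _ = r^2 * ((1 - r) / (4 * (1 + r))) := by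
        rw [integral_const_mul, integral_sub_half_sq_of_selfSimilar hP hr1 (by linarith)]
end

section
/- Let $P$ be the uniform Cantor distribution with contraction ratio $r=1/3$. Define $V_n=\inf\{\int\min_{a\in\alpha}(x-a)^2\,dP(x):\alpha\subset\mathbb{R},\ \mathrm{card}(\alpha)\le n\}$. Then $V_2=\frac{1}{72}$, achieved by the set $\{1/6,\,5/6\}$. -/
/-!
Put `m = (a + b) / 2`. The squared distance from `x` to `{a, b}` is `(|x - m| - |b - a| / 2)²`, so
the two-point error is `E(X - m)² - |b - a| E|X - m| + (b - a)² / 4 ≥ E(X - m)² - (E|X - m|)²`,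
and `E(X - m)² = 1/8 + (m - 1/2)²`. Self-similarity gives
`E|X - t| = (E|X - 3t| + E|X - (3t - 2)|) / 6`; as `X ∈ [0, 1]` almost surely, `E|X - t|` equals
`|t - 1/2|` outside `(0, 1)` and is at most `1/2` inside. Splitting `[0, 1]` into thirds then yields
`(E|X - m|)² ≤ (m - 1/2)² + 1/9`, so the error is at least `1/8 - 1/9 = 1/72`, with equality for
`{1/6, 5/6}` since `E|X - 1/2| = 1/3`. That `X ∈ [0, 1]` also comes from self-similarity: for
`t ≥ 1` it forces `P(X > t) ≤ P(X > 3t)`, which tends to `0`.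
-/

open MeasureTheory Set Filter Topology
open scoped ENNReal

lemma Smap_one_third_zero : Smap (1 / 3) 0 = fun x => x / 3 := by
  funext x; simp [Smap]; ring

lemma Smap_one_third_one : Smap (1 / 3) 1 = fun x => x / 3 + 2 / 3 := by
  funext x; simp [Smap]; norm_num; ring

lemma le_zero_of_le_comp_const_mul {f : ℝ → ℝ} {c k : ℝ} (hc : 0 < c) (hk : 1 < k)
    (hf : Tendsto f atTop (𝓝 0)) (h : ∀ t ≥ c, f t ≤ f (k * t)) : f c ≤ 0 := by
  have hle : ∀ n : ℕ, f c ≤ f (k ^ n * c) := by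
    intro n
    induction n with
    | zero => simp
    | succ n ih =>
      calc f c ≤ f (k ^ n * c) := ih
        _ ≤ f (k * (k ^ n * c)) := h _ (le_mul_of_one_le_left hc.le (one_le_pow₀ hk.le))
        _ = f (k ^ (n + 1) * c) := by ring_nf
  exact ge_of_tendsto' (hf.comp ((tendsto_pow_atTop_atTop_of_one_lt hk).atTop_mul_const hc)) hle

lemma tendsto_measureReal_Ioi_atTop (μ : Measure ℝ) [IsProbabilityMeasure μ] :
    Tendsto (fun t => μ.real (Ioi t)) atTop (𝓝 0) := by
  have h : ∀ t, μ.real (Ioi t) = 1 - ProbabilityTheory.cdf μ t := fun t => by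
    rw [ProbabilityTheory.cdf_eq_real, ← compl_Iic, measureReal_compl measurableSet_Iic,
      probReal_univ]
  simpa [h] using (ProbabilityTheory.tendsto_cdf_atTop μ).const_sub 1

lemma tendsto_measureReal_Iio_atBot (μ : Measure ℝ) [IsProbabilityMeasure μ] :
    Tendsto (fun t => μ.real (Iio t)) atBot (𝓝 0) :=
  tendsto_of_tendsto_of_tendsto_of_le_of_le tendsto_const_nhds
    (ProbabilityTheory.tendsto_cdf_atBot μ) (fun _ => measureReal_nonneg)
    (fun t => (ProbabilityTheory.cdf_eq_real μ t).symm ▸ measureReal_mono Iio_subset_Iic_self)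

lemma Continuous.integrable_of_ae_mem {X E : Type*} [TopologicalSpace X] [T2Space X]
    [MeasurableSpace X] [OpensMeasurableSpace X] [NormedAddCommGroup E] {μ : Measure X}
    [IsFiniteMeasure μ] {f : X → E} {K : Set X} (hf : Continuous f) (hK : IsCompact K)
    (h : ∀ᵐ x ∂μ, x ∈ K) : Integrable f μ := by
  rw [← Measure.restrict_eq_self_of_ae_mem h]
  exact hf.continuousOn.integrableOn_compact hK

lemma min_sq_sub_sq_eq (x a b : ℝ) :
    min ((x - a) ^ 2) ((x - b) ^ 2)
      = (x - (a + b) / 2) ^ 2 - |b - a| * |x - (a + b) / 2| + (b - a) ^ 2 / 4 := by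
  rcases le_total a b with hab | hab <;> rcases le_total x ((a + b) / 2) with hx | hx
  · rw [min_eq_left (by nlinarith), abs_of_nonneg (by linarith), abs_of_nonpos (by linarith)]; ring
  · rw [min_eq_right (by nlinarith), abs_of_nonneg (by linarith), abs_of_nonneg (by linarith)]; ring
  · rw [min_eq_right (by nlinarith), abs_of_nonpos (by linarith), abs_of_nonpos (by linarith)]; ring
  · rw [min_eq_left (by nlinarith), abs_of_nonpos (by linarith), abs_of_nonneg (by linarith)]; ring

lemma integral_min_sq_sub_sq {μ : Measure ℝ} [IsProbabilityMeasure μ] (a b : ℝ)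
    (h2 : Integrable (fun x => (x - (a + b) / 2) ^ 2) μ)
    (h1 : Integrable (fun x => |x - (a + b) / 2|) μ) :
    ∫ x, min ((x - a) ^ 2) ((x - b) ^ 2) ∂μ
      = ∫ x, (x - (a + b) / 2) ^ 2 ∂μ - |b - a| * ∫ x, |x - (a + b) / 2| ∂μ + (b - a) ^ 2 / 4 := by
  simp_rw [min_sq_sub_sq_eq _ a b]
  have h21 : Integrable (fun x => (x - (a + b) / 2) ^ 2 - |b - a| * |x - (a + b) / 2|) μ :=
    h2.sub (h1.const_mul _)
  rw [integral_add h21 (integrable_const _), integral_sub h2 (h1.const_mul _),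
    integral_const_mul, integral_const]
  simp

section Cantor

variable {P : Measure ℝ} [IsProbabilityMeasure P]
  (hP : P = (2 : ℝ≥0∞)⁻¹ • P.map (Smap (1/3) 0) + (2 : ℝ≥0∞)⁻¹ • P.map (Smap (1/3) 1))
include hP

lemma measureReal_eq_half_add_half {s : Set ℝ} (hs : MeasurableSet s) :
    P.real s = P.real ((· / 3) ⁻¹' s) / 2 + P.real ((· / 3 + 2 / 3) ⁻¹' s) / 2 := by
  have hS0 : Measurable (Smap (1 / 3) 0) := by rw [Smap_one_third_zero]; fun_prop
  have hS1 : Measurable (Smap (1 / 3) 1) := by rw [Smap_one_third_one]; fun_prop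
  conv_lhs => rw [hP]
  rw [measureReal_def, Measure.add_apply, Measure.smul_apply, Measure.smul_apply,
    Measure.map_apply hS0 hs, Measure.map_apply hS1 hs, Smap_one_third_zero, Smap_one_third_one,
    smul_eq_mul, smul_eq_mul,
    ENNReal.toReal_add (ENNReal.mul_ne_top (by simp) (measure_ne_top _ _))
      (ENNReal.mul_ne_top (by simp) (measure_ne_top _ _))]
  simp only [ENNReal.toReal_mul, ENNReal.toReal_inv, ENNReal.toReal_ofNat, measureReal_def]
  ring

lemma measureReal_Ioi_one : P.real (Ioi 1) = 0 := by
  refine le_antisymm (le_zero_of_le_comp_const_mul (f := fun t => P.real (Ioi t)) one_pos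
    (by norm_num : (1 : ℝ) < 3) (tendsto_measureReal_Ioi_atTop P) fun t ht => ?_) measureReal_nonneg
  have h := measureReal_eq_half_add_half hP (s := Ioi t) measurableSet_Ioi
  have h0 : P.real ((· / 3) ⁻¹' Ioi t) ≤ P.real (Ioi (3 * t)) :=
    measureReal_mono fun x hx => by simp only [mem_preimage, mem_Ioi] at *; linarith
  have h1 : P.real ((· / 3 + 2 / 3) ⁻¹' Ioi t) ≤ P.real (Ioi t) :=
    measureReal_mono fun x hx => by simp only [mem_preimage, mem_Ioi] at *; linarith
  linarith

lemma measureReal_Iio_zero : P.real (Iio 0) = 0 := by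
  have htail : P.real (Iio (-2)) ≤ 0 := by
    refine le_zero_of_le_comp_const_mul (f := fun t => P.real (Iio (-t))) two_pos
      (by norm_num : (1 : ℝ) < 3) ((tendsto_measureReal_Iio_atBot P).comp tendsto_neg_atTop_atBot)
      fun t ht => ?_
    have h := measureReal_eq_half_add_half hP (s := Iio (-t)) measurableSet_Iio
    have h0 : P.real ((· / 3) ⁻¹' Iio (-t)) ≤ P.real (Iio (-(3 * t))) :=
      measureReal_mono fun x hx => by simp only [mem_preimage, mem_Iio] at *; linarith
    have h1 : P.real ((· / 3 + 2 / 3) ⁻¹' Iio (-t)) ≤ P.real (Iio (-t)) :=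
      measureReal_mono fun x hx => by simp only [mem_preimage, mem_Iio] at *; linarith
    linarith
  -- `x ↦ x / 3` fixes `0`; the left tail is pushed away from `0` by the other branch.
  have h := measureReal_eq_half_add_half hP (s := Iio 0) measurableSet_Iio
  have h0 : P.real ((· / 3) ⁻¹' Iio 0) ≤ P.real (Iio 0) :=
    measureReal_mono fun x hx => by simp only [mem_preimage, mem_Iio] at *; linarith
  have h1 : P.real ((· / 3 + 2 / 3) ⁻¹' Iio 0) ≤ P.real (Iio (-2)) :=
    measureReal_mono fun x hx => by simp only [mem_preimage, mem_Iio] at *; linarith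
  linarith [measureReal_nonneg (μ := P) (s := Iio 0)]

lemma ae_mem_Icc : ∀ᵐ x ∂P, x ∈ Icc (0 : ℝ) 1 := by
  have hIio : P (Iio 0) = 0 := (measureReal_eq_zero_iff).1 (measureReal_Iio_zero hP)
  have hIoi : P (Ioi 1) = 0 := (measureReal_eq_zero_iff).1 (measureReal_Ioi_one hP)
  filter_upwards [measure_eq_zero_iff_ae_notMem.1 hIio, measure_eq_zero_iff_ae_notMem.1 hIoi]
    with x h0 h1
  exact ⟨not_lt.1 h0, not_lt.1 h1⟩

lemma integrable_of_continuous {f : ℝ → ℝ} (hf : Continuous f) : Integrable f P :=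
  hf.integrable_of_ae_mem isCompact_Icc (ae_mem_Icc hP)

lemma integral_eq_half_add_half {f : ℝ → ℝ} (hf : Continuous f) :
    ∫ x, f x ∂P = (∫ x, f (x / 3) ∂P) / 2 + (∫ x, f (x / 3 + 2 / 3) ∂P) / 2 := by
  have hS0 : Continuous (Smap (1 / 3) 0) := by rw [Smap_one_third_zero]; fun_prop
  have hS1 : Continuous (Smap (1 / 3) 1) := by rw [Smap_one_third_one]; fun_prop
  have hint : ∀ i, Integrable f (P.map (Smap (1 / 3) i)) := fun i => by
    have hSi : Continuous (Smap (1 / 3) i) := by fin_cases i <;> assumption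
    rw [integrable_map_measure hf.aestronglyMeasurable hSi.aemeasurable]
    exact integrable_of_continuous hP (hf.comp hSi)
  conv_lhs => rw [hP]
  rw [integral_add_measure ((hint 0).smul_measure (by simp)) ((hint 1).smul_measure (by simp)),
    integral_smul_measure, integral_smul_measure,
    integral_map hS0.aemeasurable hf.aestronglyMeasurable,
    integral_map hS1.aemeasurable hf.aestronglyMeasurable, Smap_one_third_zero, Smap_one_third_one]
  simp only [ENNReal.toReal_inv, ENNReal.toReal_ofNat, smul_eq_mul]
  ring

lemma integral_id_eq_half : ∫ x, x ∂P = 1 / 2 := by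
  have h := integral_eq_half_add_half hP (f := fun x => x) continuous_id
  rw [integral_div, integral_add (integrable_of_continuous hP (by fun_prop)) (integrable_const _),
    integral_div, integral_const] at h
  simp only [probReal_univ, smul_eq_mul, one_mul] at h
  linarith

lemma integral_sq_eq_three_eighths : ∫ x, x ^ 2 ∂P = 3 / 8 := by
  have h := integral_eq_half_add_half hP (f := fun x => x ^ 2) (by fun_prop)
  have e0 : ∫ x, (x / 3) ^ 2 ∂P = (∫ x, x ^ 2 ∂P) / 9 := by
    rw [← integral_div]; congr 1; funext x; ring
  have e1 : ∫ x, (x / 3 + 2 / 3) ^ 2 ∂P = (∫ x, x ^ 2 ∂P) / 9 + 4 / 9 * (∫ x, x ∂P) + 4 / 9 := by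
    have he : (fun x : ℝ => (x / 3 + 2 / 3) ^ 2) = fun x => x ^ 2 / 9 + (4 / 9 * x + 4 / 9) := by
      funext x; ring
    rw [he, integral_add (integrable_of_continuous hP (by fun_prop))
        (integrable_of_continuous hP (by fun_prop)),
      integral_add (integrable_of_continuous hP (by fun_prop)) (integrable_const _),
      integral_div, integral_const_mul, integral_const]
    simp only [probReal_univ, smul_eq_mul, one_mul]
    ring
  rw [e0, e1, integral_id_eq_half hP] at h
  linarith

lemma integral_sub_sq (m : ℝ) : ∫ x, (x - m) ^ 2 ∂P = 1 / 8 + (m - 1 / 2) ^ 2 := by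
  have he : (fun x : ℝ => (x - m) ^ 2) = fun x => x ^ 2 - 2 * m * x + m ^ 2 := by
    funext x; ring
  rw [he, integral_add (integrable_of_continuous hP (by fun_prop)) (integrable_const _),
    integral_sub (integrable_of_continuous hP (by fun_prop))
      (integrable_of_continuous hP (by fun_prop)),
    integral_const_mul, integral_sq_eq_three_eighths hP, integral_id_eq_half hP, integral_const]
  simp only [probReal_univ, smul_eq_mul, one_mul]
  ring

lemma integral_const_add_mul (a b : ℝ) : ∫ x, a + b * x ∂P = a + b / 2 := by
  rw [integral_add (integrable_const _) (integrable_of_continuous hP (by fun_prop)),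
    integral_const_mul, integral_id_eq_half hP, integral_const]
  simp only [probReal_univ, smul_eq_mul, one_mul]
  ring

lemma integral_abs_sub_of_nonpos {t : ℝ} (ht : t ≤ 0) : ∫ x, |x - t| ∂P = 1 / 2 - t := by
  rw [integral_congr_ae (g := fun x => -t + 1 * x), integral_const_add_mul hP]
  · ring
  filter_upwards [ae_mem_Icc hP] with x hx
  rw [abs_of_nonneg (by linarith [hx.1])]
  ring

lemma integral_abs_sub_of_one_le {t : ℝ} (ht : 1 ≤ t) : ∫ x, |x - t| ∂P = t - 1 / 2 := by
  rw [integral_congr_ae (g := fun x => t + -1 * x), integral_const_add_mul hP]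
  · ring
  filter_upwards [ae_mem_Icc hP] with x hx
  rw [abs_of_nonpos (by linarith [hx.2])]
  ring

lemma integral_abs_sub_le_half {t : ℝ} (ht : t ∈ Icc (0 : ℝ) 1) : ∫ x, |x - t| ∂P ≤ 1 / 2 := by
  have hle : ∀ᵐ x ∂P, |x - t| ≤ t + (1 - 2 * t) * x := by
    filter_upwards [ae_mem_Icc hP] with x hx
    rw [abs_le]
    constructor <;> nlinarith [hx.1, hx.2, ht.1, ht.2]
  calc ∫ x, |x - t| ∂P ≤ ∫ x, t + (1 - 2 * t) * x ∂P :=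
        integral_mono_ae (integrable_of_continuous hP (by fun_prop))
          (integrable_of_continuous hP (by fun_prop)) hle
    _ = 1 / 2 := by rw [integral_const_add_mul hP]; ring

lemma integral_abs_sub_eq (t : ℝ) :
    ∫ x, |x - t| ∂P = (∫ x, |x - 3 * t| ∂P) / 6 + (∫ x, |x - (3 * t - 2)| ∂P) / 6 := by
  have h := integral_eq_half_add_half hP (f := fun x => |x - t|) (by fun_prop)
  have e0 : ∫ x, |x / 3 - t| ∂P = (∫ x, |x - 3 * t| ∂P) / 3 := by
    rw [← integral_div]; congr 1; funext x
    rw [show x / 3 - t = (x - 3 * t) / 3 by ring, abs_div, abs_of_pos (by norm_num : (0 : ℝ) < 3)]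
  have e1 : ∫ x, |x / 3 + 2 / 3 - t| ∂P = (∫ x, |x - (3 * t - 2)| ∂P) / 3 := by
    rw [← integral_div]; congr 1; funext x
    rw [show x / 3 + 2 / 3 - t = (x - (3 * t - 2)) / 3 by ring, abs_div,
      abs_of_pos (by norm_num : (0 : ℝ) < 3)]
  rw [h, e0, e1]
  ring

lemma sq_integral_abs_sub_le (m : ℝ) : (∫ x, |x - m| ∂P) ^ 2 ≤ (m - 1 / 2) ^ 2 + 1 / 9 := by
  have hnonneg : 0 ≤ ∫ x, |x - m| ∂P := integral_nonneg fun x => abs_nonneg _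
  rcases le_or_gt m 0 with h0 | h0
  · rw [integral_abs_sub_of_nonpos hP h0]; nlinarith
  rcases le_or_gt 1 m with h1 | h1
  · rw [integral_abs_sub_of_one_le hP h1]; nlinarith
  rw [integral_abs_sub_eq hP] at hnonneg ⊢
  rcases le_or_gt m (1 / 3) with h3 | h3
  · have hl := integral_abs_sub_le_half hP (t := 3 * m) ⟨by linarith, by linarith⟩
    rw [integral_abs_sub_of_nonpos hP (t := 3 * m - 2) (by linarith)] at hnonneg ⊢
    nlinarith
  rcases le_or_gt m (2 / 3) with h4 | h4
  · rw [integral_abs_sub_of_one_le hP (t := 3 * m) (by linarith),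
      integral_abs_sub_of_nonpos hP (t := 3 * m - 2) (by linarith)]
    nlinarith
  · have hl := integral_abs_sub_le_half hP (t := 3 * m - 2) ⟨by linarith, by linarith⟩
    rw [integral_abs_sub_of_one_le hP (t := 3 * m) (by linarith)] at hnonneg ⊢
    nlinarith

lemma le_integral_min_sq (a b : ℝ) : 1 / 72 ≤ ∫ x, min ((x - a) ^ 2) ((x - b) ^ 2) ∂P := by
  rw [integral_min_sq_sub_sq a b (integrable_of_continuous hP (by fun_prop))
    (integrable_of_continuous hP (by fun_prop)), integral_sub_sq hP]
  nlinarith [sq_integral_abs_sub_le hP ((a + b) / 2), sq_abs (b - a),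
    sq_nonneg (|b - a| / 2 - ∫ x, |x - (a + b) / 2| ∂P)]

lemma integral_min_sq_one_sixth_five_sixth :
    ∫ x, min ((x - 1 / 6) ^ 2) ((x - 5 / 6) ^ 2) ∂P = 1 / 72 := by
  have hmad : ∫ x, |x - 1 / 2| ∂P = 1 / 3 := by
    rw [integral_abs_sub_eq hP, integral_abs_sub_of_one_le hP (by norm_num),
      integral_abs_sub_of_nonpos hP (by norm_num)]
    norm_num
  rw [integral_min_sq_sub_sq _ _ (integrable_of_continuous hP (by fun_prop))
    (integrable_of_continuous hP (by fun_prop)), integral_sub_sq hP]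
  norm_num [hmad]

end Cantor

lemma Finset.exists_eq_pair_of_card_le_two {α : Type*} [DecidableEq α] {s : Finset α}
    (hs : s.Nonempty) (h : s.card ≤ 2) : ∃ a b, s = {a, b} := by
  have hpos := hs.card_pos
  rcases Nat.lt_or_ge s.card 2 with h1 | h2
  · obtain ⟨a, rfl⟩ := (Finset.card_eq_one (s := s)).1 (by omega)
    exact ⟨a, a, (Finset.pair_eq_singleton a).symm⟩
  · obtain ⟨a, b, -, rfl⟩ := Finset.card_eq_two.1 (le_antisymm h h2)
    exact ⟨a, b, rfl⟩

theorem stmt10 (P : Measure ℝ) [IsProbabilityMeasure P]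
    (hP : P = (2 : ℝ≥0∞)⁻¹ • P.map (Smap (1/3) 0) + (2 : ℝ≥0∞)⁻¹ • P.map (Smap (1/3) 1)) :
    sInf {e : ℝ | ∃ α : Finset ℝ, α.Nonempty ∧ α.card ≤ 2 ∧
        e = ∫ x, sInf ((fun a => (x - a)^2) '' (α : Set ℝ)) ∂P} = 1/72 ∧
    ∫ x, min ((x - 1/6)^2) ((x - 5/6)^2) ∂P = 1/72 := by
  have hpair : ∀ a b x : ℝ, sInf ((fun c => (x - c) ^ 2) '' ((({a, b} : Finset ℝ)) : Set ℝ))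
      = min ((x - a) ^ 2) ((x - b) ^ 2) := fun a b x => by
    rw [Finset.coe_pair, image_pair, csInf_pair]
  have hopt := integral_min_sq_one_sixth_five_sixth hP
  refine ⟨IsLeast.csInf_eq ⟨⟨{1 / 6, 5 / 6}, by simp, Finset.card_le_two, ?_⟩, ?_⟩, hopt⟩
  · simp_rw [hpair, hopt]
  · rintro e ⟨α, hne, hcard, rfl⟩
    obtain ⟨a, b, rfl⟩ := Finset.exists_eq_pair_of_card_le_two hne hcard
    simp_rw [hpair]
    exact le_integral_min_sq hP a b
end

section
/- There is a unique real number $r_0\in(0,\tfrac12)$ satisfying $(r-1)(r^4+r^2)=\frac{r^7+r^6+4r^5-2r^4-2r^3-8r^2+9r-3}{6}$, and $0.435<r_0<0.4351$. -/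
/-!
Multiplying by `-6`, the equation becomes `P r = 0` for the septic `P = cantorPoly`. On `(0, 1/2)` the
derivative of `P` is positive (its negative terms sum to more than `-9`), so `P` has at most
one zero there, and `P 0.435 < 0 < P 0.4351` produces one by the intermediate value theorem.
-/

open Set

def cantorPoly (r : ℝ) : ℝ := r^7 + r^6 - 2*r^5 + 4*r^4 - 8*r^3 - 2*r^2 + 9*r - 3

theorem cantorEquation_iff (r : ℝ) :
    (r - 1) * (r^4 + r^2) = (r^7 + r^6 + 4*r^5 - 2*r^4 - 2*r^3 - 8*r^2 + 9*r - 3) / 6 ↔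
      cantorPoly r = 0 := by
  unfold cantorPoly
  constructor <;> intro h
  · linear_combination (-6 : ℝ) * h
  · linear_combination (-1/6 : ℝ) * h

theorem continuous_cantorPoly : Continuous cantorPoly := by
  unfold cantorPoly; fun_prop

theorem hasDerivAt_cantorPoly (r : ℝ) :
    HasDerivAt cantorPoly (7*r^6 + 6*r^5 - 10*r^4 + 16*r^3 - 24*r^2 - 4*r + 9) r := by
  have h := ((((((hasDerivAt_pow 7 r).fun_add (hasDerivAt_pow 6 r)).fun_sub
      ((hasDerivAt_pow 5 r).const_mul 2)).fun_add ((hasDerivAt_pow 4 r).const_mul 4)).fun_sub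
      ((hasDerivAt_pow 3 r).const_mul 8)).fun_sub ((hasDerivAt_pow 2 r).const_mul 2)).fun_add
      ((hasDerivAt_id' r).const_mul 9) |>.sub_const 3
  exact h.congr_deriv (by norm_num; ring)

theorem cantorPoly_strictMonoOn : StrictMonoOn cantorPoly (Icc 0 (1/2)) := by
  apply strictMonoOn_of_deriv_pos (convex_Icc _ _) continuous_cantorPoly.continuousOn
  intro r hr
  rw [interior_Icc] at hr
  obtain ⟨hr0, hr1⟩ := hr
  rw [(hasDerivAt_cantorPoly r).deriv]
  have hr2 : r^2 < 1/4 := by nlinarith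
  have hr4 : r^4 < 1/16 := by nlinarith
  nlinarith [pow_pos hr0 3, pow_pos hr0 5, pow_pos hr0 6]

theorem exists_cantorPoly_eq_zero : ∃ r ∈ Ioo (0.435 : ℝ) 0.4351, cantorPoly r = 0 :=
  intermediate_value_Ioo (by norm_num) continuous_cantorPoly.continuousOn
    ⟨by norm_num [cantorPoly], by norm_num [cantorPoly]⟩

theorem stmt11 :
    ∃ r₀ : ℝ, (0 < r₀ ∧ r₀ < 1/2 ∧
      (r₀ - 1) * (r₀^4 + r₀^2)
        = (r₀^7 + r₀^6 + 4*r₀^5 - 2*r₀^4 - 2*r₀^3 - 8*r₀^2 + 9*r₀ - 3) / 6) ∧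
    (∀ r : ℝ, 0 < r → r < 1/2 →
      (r - 1) * (r^4 + r^2)
        = (r^7 + r^6 + 4*r^5 - 2*r^4 - 2*r^3 - 8*r^2 + 9*r - 3) / 6 → r = r₀) ∧
    0.435 < r₀ ∧ r₀ < 0.4351 := by
  obtain ⟨r₀, ⟨hlo, hhi⟩, hroot⟩ := exists_cantorPoly_eq_zero
  have hpos : 0 < r₀ := by linarith
  have hhalf : r₀ < 1/2 := by linarith
  refine ⟨r₀, ⟨hpos, hhalf, (cantorEquation_iff r₀).mpr hroot⟩, ?_, hlo, hhi⟩
  intro r hr0 hr1 heq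
  exact cantorPoly_strictMonoOn.injOn ⟨hr0.le, hr1.le⟩ ⟨hpos.le, hhalf.le⟩
    (by rw [(cantorEquation_iff r).mp heq, hroot])
end
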